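/- Let γ > 0, T, P symmetric with P ≺ T ≺ γ²I, A invertible, and set C := (γ²I−T)^{−1/2}A, D := (γ²I−T)^{−1/2}BK, M := (γ²I−T)^{−1/2}(T−P)(γ²I−T)^{−1/2}. Then (γ²I−T)^{1/2}[2I + M⁻¹ + M − (I ± DC⁻¹)(I+M)(I ± DC⁻¹)ᵀ](γ²I−T)^{1/2} = (γ²I−P)(T−P)⁻¹(γ²I−P) − (I ± BKA⁻¹)(γ²I−P)(I ± BKA⁻¹)ᵀ, for both choices of sign. -/

import Mathlib

/-!
Write `S` for the symmetric square root of `X = γ²I − T` and `Y = T − P`, so that `X + Y = γ²I − P`.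
Then `DC⁻¹ = S⁻¹(BKA⁻¹)S`, `M = S⁻¹YS⁻¹` and `M⁻¹ = SY⁻¹S`. Because `S` is symmetric, the
similarity by `S` passes through the transpose, so conjugating the quadratic form
`(I ± DC⁻¹)(I + M)(I ± DC⁻¹)ᵀ` by `S` gives `(I ± BKA⁻¹)(X + Y)(I ± BKA⁻¹)ᵀ`, while the remaining
terms become `2X + XY⁻¹X + Y = (X + Y)Y⁻¹(X + Y)`.
-/

open Matrix

/-- The matrix square root of a positive semidefinite matrix, as defined in Mathlib of
December 2024 (`Matrix.PosSemidef.sqrt`, since removed from Mathlib). -/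
noncomputable def Matrix.PosSemidef.sqrt {n 𝕜 : Type*} [Fintype n] [DecidableEq n] [RCLike 𝕜]
    [PartialOrder 𝕜] [StarOrderedRing 𝕜]
    {A : Matrix n n 𝕜} (hA : A.PosSemidef) : Matrix n n 𝕜 :=
  hA.1.eigenvectorUnitary.1 * diagonal ((↑) ∘ (√·) ∘ hA.1.eigenvalues) *
    (star hA.1.eigenvectorUnitary : Matrix n n 𝕜)

namespace Matrix.PosSemidef

variable {n : Type*} [Fintype n] [DecidableEq n]

theorem isHermitian_sqrt {𝕜 : Type*} [RCLike 𝕜] [PartialOrder 𝕜] [StarOrderedRing 𝕜]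
    {A : Matrix n n 𝕜} (hA : A.PosSemidef) : hA.sqrt.IsHermitian := by
  have hdiag : star (RCLike.ofReal ∘ (√·) ∘ hA.1.eigenvalues : n → 𝕜) =
      RCLike.ofReal ∘ (√·) ∘ hA.1.eigenvalues := by
    ext i; simp
  simp only [IsHermitian, sqrt, conjTranspose_mul, diagonal_conjTranspose, hdiag,
    star_eq_conjTranspose, conjTranspose_conjTranspose, mul_assoc]

variable {A : Matrix n n ℝ} (hA : A.PosSemidef)

theorem sqrt_mul_self : hA.sqrt * hA.sqrt = A := by
  set U : Matrix n n ℝ := hA.1.eigenvectorUnitary.1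
  have hU : star U * U = 1 := Unitary.star_mul_self_of_mem hA.1.eigenvectorUnitary.2
  have hdiag : diagonal (RCLike.ofReal ∘ (√·) ∘ hA.1.eigenvalues) *
      diagonal (RCLike.ofReal ∘ (√·) ∘ hA.1.eigenvalues) =
      diagonal (RCLike.ofReal ∘ hA.1.eigenvalues : n → ℝ) := by
    rw [diagonal_mul_diagonal]
    congr 1 with i
    simp [Real.mul_self_sqrt (hA.eigenvalues_nonneg i)]
  conv_rhs => rw [hA.1.spectral_theorem, Unitary.conjStarAlgAut_apply]
  simp only [sqrt, ← hdiag, mul_assoc]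
  rw [← mul_assoc (star U) U, hU, one_mul]

theorem isSymm_sqrt : hA.sqrt.IsSymm :=
  isHermitian_iff_isSymm.mp hA.isHermitian_sqrt

theorem isUnit_sqrt_of_posDef (hA' : A.PosDef) : IsUnit hA.sqrt :=
  isUnit_of_mul_isUnit_left (hA.sqrt_mul_self ▸ hA'.isUnit)

end Matrix.PosSemidef

namespace Matrix

variable {n R : Type*} [Fintype n] [DecidableEq n] [CommRing R] {S : Matrix n n R}

theorem mul_conj_nonsing_inv_mul (hS : IsUnit S.det) (Y : Matrix n n R) :
    S * (S⁻¹ * Y * S⁻¹) * S = Y := by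
  rw [← mul_assoc, ← mul_assoc, mul_nonsing_inv _ hS, one_mul, nonsing_inv_mul_cancel_right _ _ hS]

theorem inv_conj_nonsing_inv (hS : IsUnit S.det) (Y : Matrix n n R) :
    (S⁻¹ * Y * S⁻¹)⁻¹ = S * Y⁻¹ * S := by
  rw [Matrix.mul_inv_rev, Matrix.mul_inv_rev, nonsing_inv_nonsing_inv _ hS, mul_assoc]

theorem add_mul_nonsing_inv_mul_add {Y : Matrix n n R} (hY : IsUnit Y.det) (X : Matrix n n R) :
    (X + Y) * Y⁻¹ * (X + Y) = (2 : R) • X + X * Y⁻¹ * X + Y := by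
  calc (X + Y) * Y⁻¹ * (X + Y) = X * Y⁻¹ * X + X * (Y⁻¹ * Y) + Y * Y⁻¹ * X + Y * Y⁻¹ * Y := by
        noncomm_ring
    _ = _ := by rw [nonsing_inv_mul Y hY, mul_nonsing_inv Y hY, two_smul]; noncomm_ring

theorem conj_two_add_inv_add {Y : Matrix n n R} (hS : IsUnit S.det) (hY : IsUnit Y.det) :
    S * ((2 : R) • 1 + (S⁻¹ * Y * S⁻¹)⁻¹ + S⁻¹ * Y * S⁻¹) * S = (S * S + Y) * Y⁻¹ * (S * S + Y) := by
  rw [add_mul_nonsing_inv_mul_add hY]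
  calc _ = (2 : R) • (S * S) + S * (S⁻¹ * Y * S⁻¹)⁻¹ * S + S * (S⁻¹ * Y * S⁻¹) * S := by noncomm_ring
    _ = _ := by rw [inv_conj_nonsing_inv hS, mul_conj_nonsing_inv_mul hS]; noncomm_ring

theorem conj_similar_mul_transpose (hS : IsUnit S.det) (hSs : S.IsSymm) (F N : Matrix n n R) :
    S * ((S⁻¹ * F * S) * N * (S⁻¹ * F * S)ᵀ) * S = F * (S * N * S) * Fᵀ := by
  have hSinvS : S⁻¹ * S = 1 := nonsing_inv_mul S hS
  have hSSinv : S * S⁻¹ = 1 := mul_nonsing_inv S hS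
  simp only [transpose_mul, transpose_nonsing_inv, hSs.eq]
  calc _ = (S * S⁻¹) * F * S * N * S * Fᵀ * (S⁻¹ * S) := by noncomm_ring
    _ = _ := by rw [hSinvS, hSSinv]; noncomm_ring

end Matrix

theorem stmt13_general {n m : ℕ} (γ : ℝ)
    (T P A : Matrix (Fin n) (Fin n) ℝ)
    (B : Matrix (Fin n) (Fin m) ℝ) (K : Matrix (Fin m) (Fin n) ℝ)
    (hTP : (T - P).PosDef)
    (hγT : (γ ^ 2 • (1 : Matrix (Fin n) (Fin n) ℝ) - T).PosDef)
    (C D M : Matrix (Fin n) (Fin n) ℝ)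
    (hC : C = ((Matrix.PosSemidef.sqrt hγT.posSemidef))⁻¹ * A)
    (hD : D = ((Matrix.PosSemidef.sqrt hγT.posSemidef))⁻¹ * (B * K))
    (hM : M = ((Matrix.PosSemidef.sqrt hγT.posSemidef))⁻¹ * (T - P) * ((Matrix.PosSemidef.sqrt hγT.posSemidef))⁻¹) :
    ∀ ε : ℝ, ε = 1 ∨ ε = -1 →
      (Matrix.PosSemidef.sqrt hγT.posSemidef) *
          ((2 : ℝ) • (1 : Matrix (Fin n) (Fin n) ℝ) + M⁻¹ + M
            - (1 + ε • (D * C⁻¹)) * (1 + M) * (1 + ε • (D * C⁻¹))ᵀ) *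
          (Matrix.PosSemidef.sqrt hγT.posSemidef) =
        (γ ^ 2 • (1 : Matrix (Fin n) (Fin n) ℝ) - P) * (T - P)⁻¹ *
            (γ ^ 2 • (1 : Matrix (Fin n) (Fin n) ℝ) - P)
          - (1 + ε • (B * K * A⁻¹)) * (γ ^ 2 • (1 : Matrix (Fin n) (Fin n) ℝ) - P) *
              (1 + ε • (B * K * A⁻¹))ᵀ := by
  intro ε _
  set S := hγT.posSemidef.sqrt
  have hS : IsUnit S.det := (isUnit_iff_isUnit_det S).mp (hγT.posSemidef.isUnit_sqrt_of_posDef hγT)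
  have hY : IsUnit (T - P).det := (isUnit_iff_isUnit_det _).mp hTP.isUnit
  have hG : 1 + ε • (D * C⁻¹) = S⁻¹ * (1 + ε • (B * K * A⁻¹)) * S := by
    rw [hD, hC, Matrix.mul_inv_rev, nonsing_inv_nonsing_inv _ hS, mul_add, add_mul, mul_one,
      nonsing_inv_mul _ hS, mul_smul_comm, smul_mul_assoc]
    noncomm_ring
  have hγP : γ ^ 2 • (1 : Matrix (Fin n) (Fin n) ℝ) - P = S * S + (T - P) := by
    rw [hγT.posSemidef.sqrt_mul_self]; abel
  have hN : S * (1 + M) * S = S * S + (T - P) := by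
    rw [hM, mul_add, add_mul, mul_one, mul_conj_nonsing_inv_mul hS]
  rw [mul_sub, sub_mul, hG, conj_similar_mul_transpose hS hγT.posSemidef.isSymm_sqrt, hN, hM,
    conj_two_add_inv_add hS hY, hγP]

/-- With `C = (γ²I−T)^{−1/2}A`, `D = (γ²I−T)^{−1/2}BK`,
`M = (γ²I−T)^{−1/2}(T−P)(γ²I−T)^{−1/2}`, for both signs `ε = ±1`:
`(γ²I−T)^{1/2}[2I+M⁻¹+M−(I+εDC⁻¹)(I+M)(I+εDC⁻¹)ᵀ](γ²I−T)^{1/2}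
 = (γ²I−P)(T−P)⁻¹(γ²I−P) − (I+εBKA⁻¹)(γ²I−P)(I+εBKA⁻¹)ᵀ`. -/
theorem stmt13 {n m : ℕ} (γ : ℝ) (hγ : 0 < γ)
    (T P A : Matrix (Fin n) (Fin n) ℝ) (hTs : T.IsSymm) (hPs : P.IsSymm)
    (hA : IsUnit A.det)
    (B : Matrix (Fin n) (Fin m) ℝ) (K : Matrix (Fin m) (Fin n) ℝ)
    (hTP : (T - P).PosDef)
    (hγT : (γ ^ 2 • (1 : Matrix (Fin n) (Fin n) ℝ) - T).PosDef)
    (C D M : Matrix (Fin n) (Fin n) ℝ)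
    (hC : C = ((Matrix.PosSemidef.sqrt hγT.posSemidef))⁻¹ * A)
    (hD : D = ((Matrix.PosSemidef.sqrt hγT.posSemidef))⁻¹ * (B * K))
    (hM : M = ((Matrix.PosSemidef.sqrt hγT.posSemidef))⁻¹ * (T - P) * ((Matrix.PosSemidef.sqrt hγT.posSemidef))⁻¹) :
    ∀ ε : ℝ, ε = 1 ∨ ε = -1 →
      (Matrix.PosSemidef.sqrt hγT.posSemidef) *
          ((2 : ℝ) • (1 : Matrix (Fin n) (Fin n) ℝ) + M⁻¹ + M
            - (1 + ε • (D * C⁻¹)) * (1 + M) * (1 + ε • (D * C⁻¹))ᵀ) *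
          (Matrix.PosSemidef.sqrt hγT.posSemidef) =
        (γ ^ 2 • (1 : Matrix (Fin n) (Fin n) ℝ) - P) * (T - P)⁻¹ *
            (γ ^ 2 • (1 : Matrix (Fin n) (Fin n) ℝ) - P)
          - (1 + ε • (B * K * A⁻¹)) * (γ ^ 2 • (1 : Matrix (Fin n) (Fin n) ℝ) - P) *
              (1 + ε • (B * K * A⁻¹))ᵀ :=
  stmt13_general γ T P A B K hTP hγT C D M hC hD hM
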